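/- arXiv:1109.6248 — 3 statements merged into one kernel-verified Lean document; each statement's English description precedes it below -/
import Mathlib

section
/- Let (M,φ,ξ,η,g) be a non-Sasakian contact metric (κ,μ)-space with Boeckx invariant I_M = (1−μ/2)/√(1−κ) satisfying |I_M| > 1 (equivalently α := (2−μ)² − 4(1−κ) > 0). Then the tensor φ̄ := ε(1/√α)((2−μ)φ + 2φh), with ε = sign(I_M), satisfies φ̄² = −I + η⊗ξ, i.e. (φ̄,ξ,η) is an almost contact structure. -/
/-- If `|I_M| > 1` (i.e. `α = (2−μ)² − 4(1−κ) > 0`), then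
`φ̄ = ε(1/√α)((2−μ)φ + 2φh)` with `ε = sign I_M` satisfies `φ̄² = −I + η⊗ξ`,
i.e. `(φ̄, ξ, η)` is an almost contact structure. -/
theorem kmu_canonical_almost_contact {V : Type*} [AddCommGroup V] [Module ℝ V]
    (φ h : V →ₗ[ℝ] V) (ξ : V) (η : V →ₗ[ℝ] ℝ) (κ μ ε : ℝ)
    (hκ : κ < 1)
    (hI : 1 < |(1 - μ / 2) / Real.sqrt (1 - κ)|)
    (hε : ε = Real.sign ((1 - μ / 2) / Real.sqrt (1 - κ)))
    (hphi2 : ∀ X, φ (φ X) = -X + η X • ξ)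
    (hphixi : φ ξ = 0)
    (hetaxi : η ξ = 1)
    (hetaphi : ∀ X, η (φ X) = 0)
    (hetah : ∀ X, η (h X) = 0)
    (hhxi : h ξ = 0)
    (hh2 : ∀ X, h (h X) = (-(1 - κ)) • φ (φ X))
    (hhanti : ∀ X, h (φ X) = -φ (h X)) :
    ∀ X, (fun Y => (ε / Real.sqrt ((2 - μ) ^ 2 - 4 * (1 - κ))) •
        ((2 - μ) • φ Y + (2 : ℝ) • φ (h Y)))
      ((fun Y => (ε / Real.sqrt ((2 - μ) ^ 2 - 4 * (1 - κ))) •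
        ((2 - μ) • φ Y + (2 : ℝ) • φ (h Y))) X) = -X + η X • ξ := by
  intro X
  have hk : (0:ℝ) < 1 - κ := by linarith
  have hsk : 0 < Real.sqrt (1 - κ) := Real.sqrt_pos.mpr hk
  have hαpos : 0 < (2 - μ) ^ 2 - 4 * (1 - κ) := by
    rw [abs_div, abs_of_pos hsk, lt_div_iff₀ hsk, one_mul] at hI
    nlinarith [sq_abs (1 - μ / 2), Real.sq_sqrt hk.le]
  have hs2 : Real.sqrt ((2 - μ) ^ 2 - 4 * (1 - κ)) ^ 2 = (2 - μ) ^ 2 - 4 * (1 - κ) :=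
    Real.sq_sqrt hαpos.le
  have hspos : 0 < Real.sqrt ((2 - μ) ^ 2 - 4 * (1 - κ)) := Real.sqrt_pos.mpr hαpos
  have hIne : (1 - μ / 2) / Real.sqrt (1 - κ) ≠ 0 := by
    intro h0; rw [h0] at hI; norm_num at hI
  have hε2 : ε ^ 2 = 1 := by
    rcases Real.sign_apply_eq_of_ne_zero _ hIne with h1 | h1 <;> rw [hε, h1] <;> ring
  simp only [map_add, map_smul, map_neg, smul_add, smul_neg, smul_smul, hhanti, hh2,
    hphi2, hphixi, hetaphi, hetah, hetaxi, hetaxi, map_zero, smul_zero, map_neg,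
    LinearMap.map_smul, neg_neg]
  match_scalars
  · field_simp
    linear_combination (4 * μ - μ ^ 2 - 4 * κ) * hε2 + hs2
  · field_simp
    linear_combination (η X * (μ ^ 2 - 4 * μ + 4 * κ)) * hε2 + (-η X) * hs2
  · field_simp
    ring
end

section
/- Let (M,φ,ξ,η,g) be a non-Sasakian contact metric (κ,μ)-space with α := (2−μ)² − 4(1−κ) < 0 (equivalently |I_M| < 1). Then the tensor φ̃ := (1/√(−α))((2−μ)φ + 2φh) satisfies φ̃² = I − η⊗ξ, i.e. (φ̃,ξ,η) satisfies the defining identity of an almost paracontact structure. -/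
/-- If `α = (2−μ)² − 4(1−κ) < 0` (i.e. `|I_M| < 1`), then
`φ̃ = (1/√(−α))((2−μ)φ + 2φh)` satisfies `φ̃² = I − η⊗ξ`,
the defining identity of an almost paracontact structure. -/
theorem kmu_canonical_almost_paracontact {V : Type*} [AddCommGroup V] [Module ℝ V]
    (φ h : V →ₗ[ℝ] V) (ξ : V) (η : V →ₗ[ℝ] ℝ) (κ μ : ℝ)
    (hκ : κ < 1)
    (hα : (2 - μ) ^ 2 - 4 * (1 - κ) < 0)
    (hphi2 : ∀ X, φ (φ X) = -X + η X • ξ)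
    (hphixi : φ ξ = 0)
    (hetaxi : η ξ = 1)
    (hetaphi : ∀ X, η (φ X) = 0)
    (hetah : ∀ X, η (h X) = 0)
    (hhxi : h ξ = 0)
    (hh2 : ∀ X, h (h X) = (-(1 - κ)) • φ (φ X))
    (hhanti : ∀ X, h (φ X) = -φ (h X)) :
    ∀ X, (fun Y => (1 / Real.sqrt (-((2 - μ) ^ 2 - 4 * (1 - κ)))) •
        ((2 - μ) • φ Y + (2 : ℝ) • φ (h Y)))
      ((fun Y => (1 / Real.sqrt (-((2 - μ) ^ 2 - 4 * (1 - κ)))) •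
        ((2 - μ) • φ Y + (2 : ℝ) • φ (h Y))) X) = X - η X • ξ := by
  intro X
  set a : ℝ := -((2 - μ) ^ 2 - 4 * (1 - κ)) with ha
  have hapos : 0 < a := by simp [ha]; linarith
  have hs : Real.sqrt a * Real.sqrt a = a := Real.mul_self_sqrt hapos.le
  have hsne : Real.sqrt a ≠ 0 := ne_of_gt (Real.sqrt_pos.mpr hapos)
  simp only
  -- expand
  have key : (2 - μ) • φ ((2 - μ) • φ X + (2:ℝ) • φ (h X))
      + (2:ℝ) • φ (h ((2 - μ) • φ X + (2:ℝ) • φ (h X))) = a • (X - η X • ξ) := by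
    simp only [map_add, map_smul, smul_add, smul_smul, hphi2, hhanti, map_neg, hh2,
      hetaphi, hetah, hetaxi]
    simp only [ha]
    module
  rw [map_smul φ, map_smul h, map_smul φ]
  rw [show ∀ (u v : V), (2-μ) • ((1/Real.sqrt a) • u) + (2:ℝ) • ((1/Real.sqrt a) • v)
      = (1/Real.sqrt a) • ((2-μ) • u + (2:ℝ) • v) from fun u v => by module]
  rw [smul_smul, key, smul_smul]
  have : 1 / Real.sqrt a * (1 / Real.sqrt a) * a = 1 := by
    field_simp
    rw [sq, hs]
  rw [this, one_smul]
end

section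
/- Let (M,φ,ξ,η,g) be a non-Sasakian contact metric (κ,μ)-space with |I_M| < 1 and let (φₙ) be the canonical sequence φ₀ = φ, φ₁ = (1/(2√(1−κ)))L_ξφ₀, φₙ = (1/√(−α))L_ξφ_{n−1} for n ≥ 2, where α = (2−μ)² − 4(1−κ). Then the paraSasakian tensor φ̃₂ associated (by the canonical construction with parameters κ₂ = κ + (1−μ/2)², μ₂ = 2, h₂ = √(1−I_M²)·h) to the contact metric (κ₂,μ₂)-structure (φ₂,ξ,η,g₂) coincides with the paraSasakian tensor φ̃ = (1/√(−α))((2−μ)φ + 2φh) associated to the original structure. -/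
set_option maxHeartbeats 1000000 in
/-- For a non-Sasakian `(κ,μ)`-space with `|I_M| < 1`, the paraSasakian tensor
associated to the second member `(φ₂,ξ,η,g₂)` of the canonical sequence
(a `(κ₂,μ₂)`-structure with `κ₂ = κ+(1−μ/2)²`, `μ₂ = 2`, `h₂ = √(1−I_M²)h`)
coincides with the paraSasakian tensor `φ̃ = (1/√(−α))((2−μ)φ + 2φh)` of the
original structure. -/
theorem kmu_canonical_sequence_parasasaki_invariant
    {V : Type*} [AddCommGroup V] [Module ℝ V]
    (φ h : V →ₗ[ℝ] V) (ξ : V) (η : V →ₗ[ℝ] ℝ) (κ μ : ℝ)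
    (hκ : κ < 1)
    (hα : (2 - μ) ^ 2 - 4 * (1 - κ) < 0)
    (hphi2 : ∀ X, φ (φ X) = -X + η X • ξ)
    (hphixi : φ ξ = 0)
    (hetaxi : η ξ = 1)
    (hetaphi : ∀ X, η (φ X) = 0)
    (hhxi : h ξ = 0)
    (hh2 : ∀ X, h (h X) = (-(1 - κ)) • φ (φ X))
    (hhanti : ∀ X, h (φ X) = -φ (h X)) :
    ∀ X : V,
      -- `φ̃₂`, the paraSasakian tensor of the `(κ₂,μ₂)`-structure, where
      -- `φ₂ = ((2−μ)φh + 2(1−κ)φ)/√((1−κ)(4(1−κ)−(2−μ)²))` and `h₂ = √(1−I_M²)h`: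
      (1 / Real.sqrt (-((2 - (2 : ℝ)) ^ 2 - 4 * (1 - (κ + (1 - μ / 2) ^ 2))))) •
        ((2 - (2 : ℝ)) •
            ((1 / Real.sqrt ((1 - κ) * (4 * (1 - κ) - (2 - μ) ^ 2))) •
              ((2 - μ) • φ (h X) + (2 * (1 - κ)) • φ X)) +
          (2 : ℝ) •
            ((1 / Real.sqrt ((1 - κ) * (4 * (1 - κ) - (2 - μ) ^ 2))) •
              ((2 - μ) • φ (h (Real.sqrt (1 - ((1 - μ / 2) / Real.sqrt (1 - κ)) ^ 2) • h X)) +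
               (2 * (1 - κ)) • φ (Real.sqrt (1 - ((1 - μ / 2) / Real.sqrt (1 - κ)) ^ 2) • h X)))) =
      -- equals `φ̃`, the paraSasakian tensor of the original structure:
      (1 / Real.sqrt (-((2 - μ) ^ 2 - 4 * (1 - κ)))) •
        ((2 - μ) • φ X + (2 : ℝ) • φ (h X)) := by
  
  intro X
  have ha : (0:ℝ) < 1 - κ := by linarith
  set a := 1 - κ with ha'
  set d := 4 * (1 - κ) - (2 - μ)^2 with hd'
  have hd : (0:ℝ) < d := by simp only [hd']; linarith
  have hsa : (0:ℝ) < Real.sqrt a := Real.sqrt_pos.2 ha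
  have hsd : (0:ℝ) < Real.sqrt d := Real.sqrt_pos.2 hd
  have hsa2 : Real.sqrt a ^ 2 = a := Real.sq_sqrt ha.le
  have hsd2 : Real.sqrt d ^ 2 = d := Real.sq_sqrt hd.le
  have s1 : Real.sqrt (-((2 - (2:ℝ)) ^ 2 - 4 * (1 - (κ + (1 - μ / 2) ^ 2)))) = Real.sqrt d := by
    congr 1; simp only [hd', ha']; ring
  have s4 : Real.sqrt (-((2 - μ) ^ 2 - 4 * (1 - κ))) = Real.sqrt d := by
    congr 1; simp only [hd']; ring
  have s2 : Real.sqrt ((1 - κ) * (4 * (1 - κ) - (2 - μ)^2)) = Real.sqrt a * Real.sqrt d := by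
    rw [← ha', ← hd', Real.sqrt_mul ha.le]
  have s3 : Real.sqrt (1 - ((1 - μ / 2) / Real.sqrt (1 - κ)) ^ 2)
      = Real.sqrt d / (2 * Real.sqrt a) := by
    rw [← ha']
    have h1 : 1 - ((1 - μ / 2) / Real.sqrt a) ^ 2 = d / (4 * a) := by
      rw [div_pow, hsa2]
      field_simp
      simp only [hd']; ring
    rw [h1, Real.sqrt_div hd.le]
    congr 1
    rw [show (4:ℝ) * a = 2^2 * a by ring, Real.sqrt_mul (by positivity),
      Real.sqrt_sq (by norm_num)]
  rw [s1, s2, s3, s4]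
  simp only [map_smul, hh2, hphi2, map_add, map_neg, smul_add, smul_smul, smul_neg,
    hetaphi, hphixi, zero_smul, smul_zero, map_zero, neg_neg, add_zero, neg_smul,
    sub_self]
  match_scalars <;> field_simp
  · linear_combination (-(2 * Real.sqrt d)) * hsa2
  · linear_combination ((μ - 2) * Real.sqrt d) * hsa2
end
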